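/- Let (R, 𝔪, K) be a Noetherian local ring of characteristic p, f₁,…,f_t part of a system of parameters, I = (f₁,…,f_t), R̄ = R/I, and J an 𝔪-primary ideal with I ⊆ J. Then e_HK(J; R) ≤ e_HK(JR̄; R̄) · Vol_F^J(f₁,…,f_t), where e_HK denotes Hilbert-Kunz multiplicity. -/

import Mathlib

open Ideal Filter MeasureTheory

/-- The `q`-th Frobenius power of an ideal: the ideal generated by `q`-th powers of its
elements (used with `q = p ^ e`). -/
def Ideal.frobPow {R : Type*} [CommRing R] (J : Ideal R) (q : ℕ) : Ideal R :=
  Ideal.span ((fun a => a ^ q) '' (J : Set R))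

/-- The set `V` of exponent vectors `a ∈ ℕ^t` with `I₁^{a₁} ⋯ I_t^{a_t} ⊄ J'`. -/
def Vnu {R : Type*} [CommRing R] {t : ℕ} (I : Fin t → Ideal R) (J' : Ideal R) :
    Set (Fin t → ℕ) :=
  {a | ¬ (∏ i, I i ^ a i) ≤ J'}

/-- The length of an `A`-module `M`: the Krull dimension of its lattice of submodules. -/
noncomputable def modLength (A M : Type*) [CommRing A] [AddCommGroup M] [Module A M] : ℕ∞ :=
  (Order.krullDim (Submodule A M)).unbotD 0

/-! Write `f^a = ∏ fᵢ^{aᵢ}`, `q = p^e` and `J' = J^{[q]}`. A monomial `f^a` with `a ∉ V` lies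
in `J'`, and for `a ∈ V` each `fⱼ f^a` is a monomial of larger total degree. Adjoining the
monomials `f^a`, `a ∈ V`, to `J'` in order of decreasing total degree therefore gives a chain of
ideals from `J'` up to `R` with at most `|V|` steps, each of whose factors is a cyclic module
killed by `I + J'`. Hence `λ(R/J') ≤ |V| · λ(R/(I + J'))`, and `R/(I + J') ≅ R̄/(JR̄)^{[q]}`;
dividing by `p^{e(t+s)} = p^{et} p^{es}` and letting `e → ∞` gives the inequality. -/

lemma modLength_eq_length (A M : Type*) [CommRing A] [AddCommGroup M] [Module A M] :
    modLength A M = Module.length A M := by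
  rw [modLength, ← Module.coe_length, WithBot.unbotD_coe]

namespace Ideal

variable {R : Type*} [CommRing R]

lemma length_quotient_le_of_mul_mem (B D : Ideal R) (x : R) (h : ∀ d ∈ D, d * x ∈ B) :
    Module.length R (R ⧸ B) ≤ Module.length R (R ⧸ (B ⊔ span {x})) + Module.length R (R ⧸ D) := by
  set N : Submodule R (R ⧸ B) := Submodule.map B.mkQ (span {x})
  have hsplit := Module.length_eq_add_of_exact N.subtype N.mkQ N.injective_subtype
    N.mkQ_surjective (LinearMap.exact_subtype_mkQ N)
  rw [hsplit, add_comm, (Submodule.quotientQuotientEquivQuotientSup B (span {x})).length_eq]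
  gcongr
  -- `N` is cyclic, generated by the class of `x`, which `D` annihilates
  set g : R →ₗ[R] R ⧸ B := B.mkQ ∘ₗ LinearMap.toSpanSingleton R R x
  have hD : D ≤ LinearMap.ker g := fun d hd => (Submodule.Quotient.mk_eq_zero B).mpr (h d hd)
  have hN : N = LinearMap.range (D.liftQ g hD) := by
    rw [Submodule.range_liftQ, LinearMap.range_comp, LinearMap.range_toSpanSingleton]
  rw [hN]
  exact Module.length_le_of_surjective _ (LinearMap.surjective_rangeRestrict _)

lemma length_quotient_le_card_mul {ι : Type*} [DecidableEq ι] (x : ι → R) (w : ι → ℕ)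
    (B D : Ideal R) (s : Finset ι)
    (h : ∀ i ∈ s, ∀ d ∈ D, d * x i ∈ B ⊔ span (x '' {j | j ∈ s ∧ w i < w j})) :
    Module.length R (R ⧸ B) ≤
      Module.length R (R ⧸ (B ⊔ span (x '' s))) + s.card * Module.length R (R ⧸ D) := by
  induction s using Finset.induction_on_min_value w with
  | empty =>
    rw [Finset.coe_empty, Set.image_empty, span_empty, sup_bot_eq]
    simp
  | insert a s has hmin ih =>
    have hs : ∀ i ∈ s, {j | j ∈ insert a s ∧ w i < w j} = {j | j ∈ s ∧ w i < w j} := by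
      intro i hi
      ext j
      grind [hmin i hi]
    have ih := ih fun i hi => hs i hi ▸ h i (Finset.mem_insert_of_mem hi)
    have ha : ∀ d ∈ D, d * x a ∈ B ⊔ span (x '' s) := by
      intro d hd
      refine (sup_le_sup_left (span_mono (Set.image_mono ?_)) B) (h a (s.mem_insert_self a) d hd)
      rintro j ⟨hj, hw⟩
      exact (Finset.mem_insert.1 hj).resolve_left (by rintro rfl; exact hw.false)
    have hstep := length_quotient_le_of_mul_mem _ D (x a) ha
    rw [sup_assoc, ← span_union, ← Set.image_singleton, ← Set.image_union, Set.union_singleton,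
      ← Finset.coe_insert] at hstep
    calc Module.length R (R ⧸ B)
        ≤ Module.length R (R ⧸ (B ⊔ span (x '' s))) + s.card * Module.length R (R ⧸ D) := ih
      _ ≤ Module.length R (R ⧸ (B ⊔ span (x '' ↑(insert a s)))) + Module.length R (R ⧸ D) +
          s.card * Module.length R (R ⧸ D) := by gcongr
      _ = _ := by rw [Finset.card_insert_of_notMem has]; push_cast; ring

lemma length_quotient_map_mk (I J : Ideal R) :
    Module.length (R ⧸ I) ((R ⧸ I) ⧸ J.map (Quotient.mk I)) = Module.length R (R ⧸ (I ⊔ J)) := by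
  rw [← Module.length_eq_of_surjective (S := R) Quotient.mk_surjective]
  exact (DoubleQuot.quotQuotEquivQuotSupₐ R I J).toLinearEquiv.length_eq

lemma frobPow_map_of_surjective {S : Type*} [CommRing S] {φ : R →+* S}
    (hφ : Function.Surjective φ) (J : Ideal R) (q : ℕ) :
    (J.map φ).frobPow q = (J.frobPow q).map φ := by
  rw [frobPow, frobPow, map_span, Set.image_image]
  congr 1
  ext y
  simp [mem_map_iff_of_surjective φ hφ]

lemma pow_mem_frobPow {J : Ideal R} {x : R} (hx : x ∈ J) (q : ℕ) : x ^ q ∈ J.frobPow q :=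
  subset_span ⟨x, hx, rfl⟩

end Ideal

section Monomials

variable {R : Type*} [CommRing R] {t : ℕ} (f : Fin t → R) (J : Ideal R)

local notation "F" => fun a : Fin t → ℕ => ∏ i, f i ^ a i

lemma mem_Vnu_span_singleton_iff {a : Fin t → ℕ} :
    a ∈ Vnu (fun i => span {f i}) J ↔ ∏ i, f i ^ a i ∉ J := by
  simp only [Vnu, span_singleton_pow, prod_span_singleton, span_singleton_le_iff_mem,
    Set.mem_ofPred_eq]

lemma prod_pow_add_single (a : Fin t → ℕ) (j : Fin t) :
    ∏ i, f i ^ (a + Pi.single j 1 : Fin t → ℕ) i = (∏ i, f i ^ a i) * f j := by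
  simp only [Pi.add_apply, pow_add, Finset.prod_mul_distrib]
  congr 1
  simp [Pi.single_apply]

lemma finite_Vnu_span_singleton {N : ℕ} (hN : ∀ i, f i ^ N ∈ J) :
    (Vnu (fun i => span {f i}) J).Finite := by
  refine (Set.Finite.pi fun _ => Set.finite_Iio N).subset fun a ha i _ => ?_
  rw [mem_Vnu_span_singleton_iff] at ha
  by_contra hle
  rw [Set.mem_Iio, not_lt] at hle
  exact ha (J.mem_of_dvd ((pow_dvd_pow _ hle).trans (Finset.dvd_prod_of_mem _ (Finset.mem_univ i)))
    (hN i))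

lemma sup_span_image_Vnu_eq_top : J ⊔ span (F '' Vnu (fun i => span {f i}) J) = ⊤ := by
  rw [eq_top_iff_one]
  by_cases h0 : (0 : Fin t → ℕ) ∈ Vnu (fun i => span {f i}) J
  · exact Submodule.mem_sup_right (subset_span ⟨0, h0, by simp⟩)
  · rw [mem_Vnu_span_singleton_iff, not_not] at h0
    exact Submodule.mem_sup_left (by simpa using h0)

lemma mul_prod_pow_mem_sup_span_Vnu (a : Fin t → ℕ) {d : R} (hd : d ∈ span (Set.range f) ⊔ J) :
    d * ∏ i, f i ^ a i ∈
      J ⊔ span (F '' {b | b ∈ Vnu (fun i => span {f i}) J ∧ ∑ i, a i < ∑ i, b i}) := by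
  set T := J ⊔ span (F '' {b | b ∈ Vnu (fun i => span {f i}) J ∧ ∑ i, a i < ∑ i, b i})
  suffices span (Set.range f) ⊔ J ≤ T.colon (Submodule.span R {∏ i, f i ^ a i}) from
    Submodule.mem_colon_span_singleton.1 (this hd)
  refine sup_le (span_le.2 (Set.range_subset_iff.2 fun j => ?_)) fun d hd => ?_
  · rw [SetLike.mem_coe, Submodule.mem_colon_span_singleton, smul_eq_mul, mul_comm,
      ← prod_pow_add_single]
    by_cases hb : a + Pi.single j 1 ∈ Vnu (fun i => span {f i}) J
    · exact Submodule.mem_sup_right (subset_span ⟨_, ⟨hb, by simp [Finset.sum_add_distrib]⟩, rfl⟩)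
    · rw [mem_Vnu_span_singleton_iff, not_not] at hb
      exact Submodule.mem_sup_left hb
  · exact Submodule.mem_colon_span_singleton.2 (Submodule.mem_sup_left (J.mul_mem_right _ hd))

lemma length_quotient_le_ncard_Vnu_mul {N : ℕ} (hN : ∀ i, f i ^ N ∈ J) :
    Module.length R (R ⧸ J) ≤ (Vnu (fun i => span {f i}) J).ncard *
      Module.length R (R ⧸ (span (Set.range f) ⊔ J)) := by
  classical
  have hfin := finite_Vnu_span_singleton f J hN
  have key := length_quotient_le_card_mul F (fun b => ∑ i, b i) J (span (Set.range f) ⊔ J)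
    hfin.toFinset fun a _ d hd => by
      simpa only [Set.Finite.mem_toFinset] using mul_prod_pow_mem_sup_span_Vnu f J a hd
  rwa [Set.Finite.coe_toFinset, sup_span_image_Vnu_eq_top,
    Module.length_eq_zero (M := R ⧸ (⊤ : Ideal R)), zero_add,
    ← Set.ncard_eq_toFinset_card _ hfin] at key

end Monomials

lemma ENat.toNat_le_mul_toNat {a b : ℕ∞} {n : ℕ} (h : a ≤ n * b) (hba : b ≤ a) :
    a.toNat ≤ n * b.toNat := by
  -- `hba` keeps `b` finite when `a` is, since `ENat.toNat ⊤ = 0`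
  rcases eq_or_ne a ⊤ with rfl | ha
  · simp
  lift b to ℕ using ne_top_of_le_ne_top ha hba
  lift a to ℕ using ha
  simpa only [ENat.toNat_natCast] using (by exact_mod_cast h : a ≤ n * b)

lemma toNat_modLength_quotient_frobPow_le {R : Type*} [CommRing R] {t : ℕ} (f : Fin t → R)
    {J : Ideal R} (hfJ : Ideal.span (Set.range f) ≤ J) (q : ℕ) :
    (modLength R (R ⧸ J.frobPow q)).toNat ≤ (Vnu (fun i => Ideal.span {f i}) (J.frobPow q)).ncard *
      (modLength (R ⧸ Ideal.span (Set.range f)) ((R ⧸ Ideal.span (Set.range f)) ⧸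
        (J.map (Ideal.Quotient.mk _)).frobPow q)).toNat := by
  have hf : ∀ i, f i ^ q ∈ J.frobPow q := fun i =>
    Ideal.pow_mem_frobPow (hfJ (Ideal.subset_span ⟨i, rfl⟩)) q
  rw [modLength_eq_length, modLength_eq_length,
    Ideal.frobPow_map_of_surjective Ideal.Quotient.mk_surjective, Ideal.length_quotient_map_mk]
  exact ENat.toNat_le_mul_toNat (length_quotient_le_ncard_Vnu_mul f _ hf)
    (Module.length_le_of_surjective _ (Submodule.factor_surjective le_sup_right))

lemma le_mul_of_tendsto_div_pow {x v y : ℕ → ℕ} (p : ℕ) {t s : ℕ} {a b c : ℝ}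
    (hxvy : ∀ e, x e ≤ v e * y e)
    (hx : Tendsto (fun e => (x e : ℝ) / (p : ℝ) ^ (e * (t + s))) atTop (nhds a))
    (hv : Tendsto (fun e => (v e : ℝ) / (p : ℝ) ^ (e * t)) atTop (nhds b))
    (hy : Tendsto (fun e => (y e : ℝ) / (p : ℝ) ^ (e * s)) atTop (nhds c)) :
    a ≤ b * c := by
  refine le_of_tendsto_of_tendsto' hx (hv.mul hy) fun e => ?_
  rw [div_mul_div_comm, ← pow_add, ← Nat.mul_add]
  gcongr
  exact_mod_cast hxvy e

theorem stmt18_general {R : Type*} [CommRing R] (p : ℕ) {t s : ℕ} (f : Fin t → R)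
    (I J : Ideal R) (hI : I = Ideal.span (Set.range f)) (hIJ : I ≤ J)
    (eR eS V : ℝ)
    (heR : Tendsto
      (fun e : ℕ => ((modLength R (R ⧸ J.frobPow (p ^ e))).toNat : ℝ) /
        (p : ℝ) ^ (e * (t + s))) atTop (nhds eR))
    (heS : Tendsto
      (fun e : ℕ =>
        ((modLength (R ⧸ I)
            ((R ⧸ I) ⧸ ((J.map (Ideal.Quotient.mk I)).frobPow (p ^ e)))).toNat : ℝ) /
          (p : ℝ) ^ (e * s)) atTop (nhds eS))
    (hV : Tendsto
      (fun e : ℕ => ((Vnu (fun i => Ideal.span {f i}) (J.frobPow (p ^ e))).ncard : ℝ) /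
        (p : ℝ) ^ (e * t)) atTop (nhds V)) :
    eR ≤ eS * V := by
  subst hI
  exact mul_comm eS V ▸ le_mul_of_tendsto_div_pow p
    (fun e => toNat_modLength_quotient_frobPow_le f hIJ (p ^ e)) heR hV heS

/-- For `f₁,…,f_t` part of a system of parameters of a Noetherian local ring `R` of
dimension `t + s`, `I = (f)`, `R̄ = R/I`, and `J ⊇ I` an `𝔪`-primary ideal:
`e_HK(J; R) ≤ e_HK(J R̄; R̄) · Vol_F^J(f₁,…,f_t)`. -/
theorem stmt18 {R : Type*} [CommRing R] [IsNoetherianRing R] [IsLocalRing R] (p : ℕ)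
    [Fact p.Prime] [CharP R p] {t s : ℕ} (f : Fin t → R) (g : Fin s → R)
    (hdim : ringKrullDim R = ((t + s : ℕ) : WithBot (WithTop ℕ)))
    (hsop : (Ideal.span (Set.range f ∪ Set.range g)).radical = IsLocalRing.maximalIdeal R)
    (I J : Ideal R) (hI : I = Ideal.span (Set.range f))
    (hJprim : J.radical = IsLocalRing.maximalIdeal R) (hIJ : I ≤ J)
    (eR eS V : ℝ)
    (heR : Tendsto
      (fun e : ℕ => ((modLength R (R ⧸ J.frobPow (p ^ e))).toNat : ℝ) /
        (p : ℝ) ^ (e * (t + s))) atTop (nhds eR))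
    (heS : Tendsto
      (fun e : ℕ =>
        ((modLength (R ⧸ I)
            ((R ⧸ I) ⧸ ((J.map (Ideal.Quotient.mk I)).frobPow (p ^ e)))).toNat : ℝ) /
          (p : ℝ) ^ (e * s)) atTop (nhds eS))
    (hV : Tendsto
      (fun e : ℕ => ((Vnu (fun i => Ideal.span {f i}) (J.frobPow (p ^ e))).ncard : ℝ) /
        (p : ℝ) ^ (e * t)) atTop (nhds V)) :
    eR ≤ eS * V :=
  stmt18_general p f I J hI hIJ eR eS V heR heS hV
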